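/- In type B_ℓ, the set {λ_1, …, λ_{ℓ−1}, 2λ_ℓ} is a ℤ-basis of the root lattice Y, and each of its elements μ satisfies (μ | α_0) = 2 where α_0 = α_1 + ⋯ + α_ℓ. -/
import Mathlib


open scoped RealInnerProductSpace
open Finset

/-- The Cartan matrix of type `B_ℓ` (with `a_{ℓ-1,ℓ} = -2`, `a_{ℓ,ℓ-1} = -1`). -/
def cartanB (ℓ : ℕ) (i j : ℕ) : ℤ :=
  if i = j then 2
  else if j = i + 1 then (if j = ℓ then -2 else -1)
  else if i = j + 1 then -1 else 0

/-- Coefficients of the simple root `α_i` in the basis `{λ_1,…,λ_{ℓ-1},2λ_ℓ}`. -/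
def mB (ℓ i k : ℕ) : ℤ :=
  if k = ℓ then (if i = ℓ then 1 else if i + 1 = ℓ then -1 else 0) else cartanB ℓ i k

lemma keyB (ℓ i k : ℕ) (hi : i ∈ Icc 1 ℓ) (hk : k ∈ Icc 1 ℓ) :
    ∑ j ∈ Icc 1 ℓ, (min i j : ℤ) * cartanB ℓ j k
      = if i = k then (if k = ℓ then 2 else 1) else 0 := by
  simp only [mem_Icc] at hi hk
  have hstep : ∀ j ∈ Icc 1 ℓ, (min i j : ℤ) * cartanB ℓ j k
      = (if k = j then 2 * (min i k : ℤ) else 0)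
        + (if k - 1 = j then (if k = ℓ then -2 else -1) * (min i j : ℤ) else 0)
        + (if k + 1 = j then -(min i j : ℤ) else 0) := by
    intro j hj
    simp only [mem_Icc] at hj
    unfold cartanB
    split_ifs <;> omega
  rw [Finset.sum_congr rfl hstep, Finset.sum_add_distrib, Finset.sum_add_distrib,
    Finset.sum_ite_eq, Finset.sum_ite_eq, Finset.sum_ite_eq]
  simp only [mem_Icc]
  split_ifs <;> omega

lemma mB_key (ℓ i k : ℕ) (hi : i ∈ Icc 1 ℓ) (hk : k = ℓ) :
    cartanB ℓ i k = 2 * mB ℓ i k := by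
  simp only [mem_Icc] at hi
  unfold cartanB mB
  split_ifs <;> omega

/-- In type `B_ℓ` (`ℓ ≥ 2`), the set `{λ_1, …, λ_{ℓ-1}, 2λ_ℓ}` is a `ℤ`-basis of the root
lattice `Y` (the `ℤ`-span of the simple roots), and each of its elements `μ` satisfies
`(μ|α₀) = 2`, where `α₀ = α_1 + ⋯ + α_ℓ`. -/
theorem typeB_root_lattice_basis {V : Type*} [NormedAddCommGroup V] [InnerProductSpace ℝ V]
    (ℓ : ℕ) (hℓ : 2 ≤ ℓ) (α lam : ℕ → V)
    (hαα : ∀ i ∈ Icc 1 ℓ, ∀ j ∈ Icc 1 ℓ,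
      ⟪α i, α j⟫ = if i = j then (if i = ℓ then 2 else 4)
        else if i + 1 = j ∨ j + 1 = i then -2 else 0)
    (hlam : ∀ i ∈ Icc 1 ℓ, ∀ j ∈ Icc 1 ℓ,
      ⟪lam i, α j⟫ = if i = j then ⟪α j, α j⟫ / 2 else 0)
    (hCartan : ∀ i ∈ Icc 1 ℓ, α i = ∑ j ∈ Icc 1 ℓ, (cartanB ℓ i j : ℝ) • lam j)
    (hind : ∀ c : ℕ → ℝ, (∑ j ∈ Icc 1 ℓ, c j • α j) = 0 → ∀ j ∈ Icc 1 ℓ, c j = 0)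
    (α₀ : V) (hα₀ : α₀ = ∑ j ∈ Icc 1 ℓ, α j)
    (b : ℕ → V) (hb : ∀ i, b i = if i = ℓ then (2 : ℝ) • lam ℓ else lam i) :
    AddSubgroup.closure (α '' ↑(Icc 1 ℓ)) = AddSubgroup.closure (b '' ↑(Icc 1 ℓ)) ∧
    (∀ c : ℕ → ℤ, (∑ j ∈ Icc 1 ℓ, c j • b j) = 0 → ∀ j ∈ Icc 1 ℓ, c j = 0) ∧
    (∀ j ∈ Icc 1 ℓ, ⟪b j, α₀⟫ = 2) := by
  -- `b i` as an integer combination of simple roots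
  have hBex : ∀ i ∈ Icc 1 ℓ, b i = ∑ j ∈ Icc 1 ℓ, ((min i j : ℤ) : ℝ) • α j := by
    intro i hi
    have h1 : ∑ j ∈ Icc 1 ℓ, ((min i j : ℤ) : ℝ) • α j
        = ∑ k ∈ Icc 1 ℓ,
            (((∑ j ∈ Icc 1 ℓ, (min i j : ℤ) * cartanB ℓ j k) : ℤ) : ℝ) • lam k := by
      rw [Finset.sum_congr rfl (fun j hj => by rw [hCartan j hj, Finset.smul_sum]),
        Finset.sum_comm]
      refine Finset.sum_congr rfl fun k hk => ?_
      rw [Int.cast_sum, Finset.sum_smul]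
      refine Finset.sum_congr rfl fun j hj => ?_
      rw [smul_smul]
      push_cast
      ring_nf
    rw [h1, Finset.sum_congr rfl (fun k hk => by rw [keyB ℓ i k hi hk])]
    simp only [Int.cast_ite, Int.cast_ofNat, Int.cast_one, Int.cast_zero, ite_smul, zero_smul,
      Finset.sum_ite_eq, hi, if_pos]
    rw [hb i]
    by_cases hil : i = ℓ
    · simp [hil]
    · simp [hil]
  -- `α i` as an integer combination of the `b k`
  have hAex : ∀ i ∈ Icc 1 ℓ, α i = ∑ k ∈ Icc 1 ℓ, ((mB ℓ i k : ℤ) : ℝ) • b k := by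
    intro i hi
    rw [hCartan i hi]
    refine Finset.sum_congr rfl fun k hk => ?_
    rw [hb k]
    by_cases hkl : k = ℓ
    · rw [if_pos hkl, hkl, smul_smul, mB_key ℓ i ℓ hi rfl]
      push_cast
      ring_nf
    · rw [if_neg hkl]
      unfold mB
      rw [if_neg hkl]
  -- the pairing `⟪b k, α j⟫`
  have hpair : ∀ k ∈ Icc 1 ℓ, ∀ j ∈ Icc 1 ℓ, ⟪b k, α j⟫ = if k = j then (2 : ℝ) else 0 := by
    intro k hk j hj
    have hjj : ⟪α j, α j⟫ = if j = ℓ then (2:ℝ) else 4 := by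
      rw [hαα j hj j hj, if_pos rfl]
    rw [hb k]
    by_cases hkl : k = ℓ
    · subst hkl
      rw [if_pos rfl, real_inner_smul_left, hlam k hk j hj]
      by_cases hkj : k = j
      · subst hkj
        rw [if_pos rfl, if_pos rfl, hjj, if_pos rfl]
        norm_num
      · rw [if_neg hkj, if_neg hkj, mul_zero]
    · rw [if_neg hkl, hlam k hk j hj]
      by_cases hkj : k = j
      · subst hkj
        rw [if_pos rfl, if_pos rfl, hjj, if_neg hkl]
        norm_num
      · rw [if_neg hkj, if_neg hkj]
  refine ⟨?_, ?_, ?_⟩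
  · -- equality of the two lattices
    apply le_antisymm
    · rw [AddSubgroup.closure_le]
      rintro x ⟨i, hi, rfl⟩
      have hi' : i ∈ Icc 1 ℓ := hi
      rw [SetLike.mem_coe, hAex i hi']
      refine AddSubgroup.sum_mem _ fun k hk => ?_
      rw [Int.cast_smul_eq_zsmul]
      exact AddSubgroup.zsmul_mem _
        (AddSubgroup.subset_closure (Set.mem_image_of_mem b (by simpa using hk))) _
    · rw [AddSubgroup.closure_le]
      rintro x ⟨i, hi, rfl⟩
      have hi' : i ∈ Icc 1 ℓ := hi
      rw [SetLike.mem_coe, hBex i hi']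
      refine AddSubgroup.sum_mem _ fun k hk => ?_
      rw [Int.cast_smul_eq_zsmul]
      exact AddSubgroup.zsmul_mem _
        (AddSubgroup.subset_closure (Set.mem_image_of_mem α (by simpa using hk))) _
  · -- linear independence over ℤ
    intro c hc j hj
    have h0 : ∑ k ∈ Icc 1 ℓ, ((c k : ℤ) : ℝ) • b k = 0 := by
      simp only [Int.cast_smul_eq_zsmul]
      exact hc
    have h1 : ⟪∑ k ∈ Icc 1 ℓ, ((c k : ℤ) : ℝ) • b k, α j⟫ = 0 := by
      rw [h0, inner_zero_left]
    rw [sum_inner] at h1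
    simp only [real_inner_smul_left] at h1
    rw [Finset.sum_congr rfl (fun k hk => by rw [hpair k hk j hj])] at h1
    simp only [mul_ite, mul_zero, Finset.sum_ite_eq', hj, if_pos] at h1
    have : ((c j : ℤ) : ℝ) = 0 := by linarith
    exact_mod_cast this
  · -- pairing with α₀
    intro j hj
    rw [hα₀, inner_sum, Finset.sum_congr rfl (fun k hk => hpair j hj k hk)]
    rw [Finset.sum_ite_eq, if_pos hj]
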